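/- Let T be a tree rooted at r with ψ_k(T) = 1, and let T_v be a properly rooted subtree of T. Then the single vertex v covers all paths on k vertices of T, i.e., {v} is a k-path vertex cover of T. -/

import Mathlib

/-!
Let `{w}` be a minimum `k`-path vertex cover of `T`. Since `T_v` contains a `k`-vertex path,
`w ∈ T_v`. A `k`-vertex path of `T` avoiding `v` passes through `w`, and a walk leaving
`w ∈ T_v` without meeting `v` never leaves `T_v`; so the path would lie in `T_v − v`,
which has no `k`-vertex path.
-/

/-- `I` is a `k`-path vertex cover of `G`. -/
def IsKPVC {W : Type*} (G : SimpleGraph W) (k : ℕ) (I : Set W) : Prop :=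
  ∀ ⦃u v : W⦄ (p : G.Walk u v), p.IsPath → p.length + 1 = k → ∃ x ∈ p.support, x ∈ I

/-- `G` contains a path on `k` vertices. -/
def HasKPath {W : Type*} (G : SimpleGraph W) (k : ℕ) : Prop :=
  ∃ (u w : W) (p : G.Walk u w), p.IsPath ∧ p.length + 1 = k

/-- The minimum size of a `k`-path vertex cover of `G`. -/
noncomputable def psi {W : Type*} (G : SimpleGraph W) (k : ℕ) : ℕ :=
  sInf {s : ℕ | ∃ I : Set W, IsKPVC G k I ∧ I.ncard = s}

/-- The set of vertices of the subtree `T_v` of the tree `T` rooted at `r`. -/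
def Desc {V : Type*} (T : SimpleGraph V) (r v : V) : Set V :=
  {u | ∀ p : T.Walk r u, p.IsPath → v ∈ p.support}

/-- `T_v` is properly rooted: `T_v` contains a `k`-vertex path but `T_v − v` does not. -/
def ProperlyRooted {V : Type*} (T : SimpleGraph V) (k : ℕ) (r v : V) : Prop :=
  HasKPath (T.induce (Desc T r v)) k ∧ ¬ HasKPath (T.induce (Desc T r v \ {v})) k

open SimpleGraph

section KPath

variable {W : Type*} {G : SimpleGraph W} {k : ℕ} {I : Set W}

lemma hasKPath_induce_of_isPath {s : Set W} {u w : W} (p : G.Walk u w) (hp : p.IsPath)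
    (hlen : p.length + 1 = k) (hs : ∀ x ∈ p.support, x ∈ s) : HasKPath (G.induce s) k := by
  let f : G.induce s ↪g G := Embedding.induce s
  have hinj : Function.Injective f.toHom := f.injective
  have hmap : (p.induce s hs).map f.toHom = p := Walk.map_induce p hs
  refine ⟨_, _, p.induce s hs, ?_, ?_⟩
  · rwa [← Walk.isPath_map_iff_of_injective hinj, hmap]
  · rwa [← Walk.length_map f.toHom, hmap]

lemma IsKPVC.comap {W' : Type*} {H : SimpleGraph W'} (h : IsKPVC G k I) (f : H ↪g G) :
    IsKPVC H k (f ⁻¹' I) := by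
  have hinj : Function.Injective f.toHom := f.injective
  intro u w p hp hlen
  obtain ⟨x, hx, hxI⟩ := h (p.map f.toHom)
    ((Walk.isPath_map_iff_of_injective hinj).mpr hp) (by rwa [Walk.length_map])
  rw [Walk.support_map, List.mem_map] at hx
  obtain ⟨y, hy, rfl⟩ := hx
  exact ⟨y, hy, hxI⟩

lemma IsKPVC.nonempty_of_hasKPath (h : IsKPVC G k I) (hG : HasKPath G k) : I.Nonempty := by
  obtain ⟨u, w, p, hp, hlen⟩ := hG
  obtain ⟨x, -, hx⟩ := h p hp hlen
  exact ⟨x, hx⟩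

lemma exists_isKPVC_singleton_of_psi_eq_one (h : psi G k = 1) : ∃ w, IsKPVC G k {w} := by
  have hne : {s : ℕ | ∃ I : Set W, IsKPVC G k I ∧ I.ncard = s}.Nonempty :=
    ⟨_, Set.univ, fun u _ p _ _ ↦ ⟨u, p.start_mem_support, trivial⟩, rfl⟩
  obtain ⟨I, hI, hcard⟩ := Nat.sInf_mem hne
  obtain ⟨w, rfl⟩ := Set.ncard_eq_one.mp (hcard.trans h)
  exact ⟨w, hI⟩

end KPath

section Desc

variable {V : Type*} {T : SimpleGraph V} {r v a b : V}

lemma mem_desc_of_adj (ha : a ∈ Desc T r v) (hav : a ≠ v) (hab : T.Adj a b) :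
    b ∈ Desc T r v := by
  classical
  intro q hq
  by_cases hmem : a ∈ q.support
  · exact q.support_takeUntil_subset_support hmem (ha _ (hq.takeUntil hmem))
  · have hv := ha _ (hq.concat hmem hab.symm)
    rw [Walk.support_concat, List.mem_append, List.mem_singleton] at hv
    exact hv.resolve_right hav.symm

lemma mem_desc_of_walk (p : T.Walk a b) (hv : v ∉ p.support) (ha : a ∈ Desc T r v) :
    b ∈ Desc T r v := by
  induction p with
  | nil => exact ha
  | cons hadj p ih =>
    rw [Walk.support_cons, List.mem_cons, not_or] at hv
    exact ih hv.2 (mem_desc_of_adj ha (Ne.symm hv.1) hadj)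

lemma support_subset_desc_diff (p : T.Walk a b) (hv : v ∉ p.support) {x : V}
    (hx : x ∈ p.support) (hxD : x ∈ Desc T r v) :
    ∀ z ∈ p.support, z ∈ Desc T r v \ {v} := by
  classical
  intro z hz
  refine ⟨?_, fun hzv : z = v ↦ hv (hzv ▸ hz)⟩
  refine mem_desc_of_walk ((p.takeUntil x hx).reverse.append (p.takeUntil z hz)) ?_ hxD
  rw [Walk.mem_support_append_iff, Walk.support_reverse, List.mem_reverse]
  rintro (h | h)
  exacts [hv (p.support_takeUntil_subset_support hx h),
    hv (p.support_takeUntil_subset_support hz h)]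

end Desc

theorem properly_rooted_psi_one_general {V : Type*} (T : SimpleGraph V)
    (k : ℕ) (r v : V)
    (hpsi : psi T k = 1) (hpr : ProperlyRooted T k r v) :
    IsKPVC T k ({v} : Set V) := by
  obtain ⟨w, hw⟩ := exists_isKPVC_singleton_of_psi_eq_one hpsi
  obtain ⟨⟨x, hxD⟩, hxw⟩ := (hw.comap (Embedding.induce _)).nonempty_of_hasKPath hpr.1
  obtain rfl : x = w := hxw
  intro a b p hp hlen
  by_contra hvp
  have hv : v ∉ p.support := fun h ↦ hvp ⟨v, h, rfl⟩
  obtain ⟨y, hy, rfl⟩ := hw p hp hlen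
  exact hpr.2 (hasKPath_induce_of_isPath p hp hlen (support_subset_desc_diff p hv hy hxD))

/-- If `ψ_k(T) = 1` and `T_v` is a properly rooted subtree of the tree `T` rooted at `r`,
then `{v}` is a `k`-path vertex cover of `T`. -/
theorem properly_rooted_psi_one {V : Type*} [Fintype V] (T : SimpleGraph V)
    (hT : T.IsTree) (k : ℕ) (hk : 2 ≤ k) (r v : V)
    (hpsi : psi T k = 1) (hpr : ProperlyRooted T k r v) :
    IsKPVC T k ({v} : Set V) :=
  properly_rooted_psi_one_general T k r v hpsi hpr
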